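/- Let Σ be an open convex cone in ℝⁿ, α > 0, D = n + α, and let w be a continuous function on Σ̄ that vanishes on ∂Σ, is positive and C^{1,γ} in Σ, homogeneous of degree α, and such that w^{1/α} is concave on Σ. Let Ω be a bounded smooth domain with Ω̄ ⊂ Σ, and suppose u ∈ C²(Ω̄) solves the Neumann problem w^{-1} div(w ∇u) = b_Ω in Ω, ∂u/∂ν = 1 on ∂Ω, where b_Ω = P(Ω)/m(Ω). Then m(Σ ∩ B₁) ≤ (b_Ω/D)^D m(Ω), i.e., m(Σ ∩ B₁) ≤ D^{−D} P(Ω)^D / m(Ω)^{D−1}, where B₁ is the open Euclidean unit ball centered at the origin. -/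

import Mathlib

open MeasureTheory Metric Set
open scoped RealInnerProductSpace NNReal ENNReal

open Filter Topology Finset

set_option maxHeartbeats 1600000

noncomputable section

/-- A bounded smooth domain in `ℝⁿ`: a bounded, connected, open set whose boundary is
locally the graph of a `C^∞` function (the set lying locally on one side of the graph). -/
def IsSmoothDomain {n : ℕ} (Ω : Set (EuclideanSpace ℝ (Fin n))) : Prop :=
  IsOpen Ω ∧ IsConnected Ω ∧ Bornology.IsBounded Ω ∧
  ∀ x ∈ frontier Ω, ∃ r > (0:ℝ), ∃ v : EuclideanSpace ℝ (Fin n), ‖v‖ = 1 ∧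
    ∃ φ : EuclideanSpace ℝ (Fin n) → ℝ, ContDiff ℝ (⊤ : ℕ∞) φ ∧
      ∀ y ∈ ball x r, (y ∈ Ω ↔ φ (y - ⟪y, v⟫ • v) < ⟪y, v⟫)

/-- `ν` is the outward unit normal vector field on the boundary of `Ω`. -/
def IsOutwardUnitNormal {n : ℕ} (Ω : Set (EuclideanSpace ℝ (Fin n)))
    (ν : EuclideanSpace ℝ (Fin n) → EuclideanSpace ℝ (Fin n)) : Prop :=
  ∀ x ∈ frontier Ω, ‖ν x‖ = 1 ∧
    (∀ᶠ t : ℝ in nhdsWithin 0 (Ioi 0), x + t • ν x ∉ closure Ω) ∧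
    (∀ᶠ t : ℝ in nhdsWithin 0 (Ioi 0), x - t • ν x ∈ Ω)

/-- The Laplacian of `u : ℝⁿ → ℝ`. -/
def lapl {n : ℕ} (u : EuclideanSpace ℝ (Fin n) → ℝ) (x : EuclideanSpace ℝ (Fin n)) : ℝ :=
  ∑ i : Fin n, fderiv ℝ (fun y => fderiv ℝ u y (EuclideanSpace.single i 1)) x
    (EuclideanSpace.single i 1)

theorem concave_first_order {E : Type*} [NormedAddCommGroup E] [NormedSpace ℝ E]
    {g : E → ℝ} {s : Set E} (hg : ConcaveOn ℝ s g) {x p : E}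
    (hx : x ∈ s) (hp : p ∈ s) {ℓ : E →L[ℝ] ℝ} (hd : HasFDerivAt g ℓ x) :
    g p ≤ g x + ℓ (p - x) := by
  set ψ : ℝ → ℝ := fun t => g (x + t • (p - x)) with hψ
  have hline : HasDerivAt (fun t : ℝ => x + t • (p - x)) (p - x) 0 := by
    simpa using ((hasDerivAt_id (0:ℝ)).smul_const (p - x)).const_add x
  have hd' : HasFDerivAt g ℓ (x + (0:ℝ) • (p - x)) := by simpa using hd
  have hψd : HasDerivAt ψ (ℓ (p - x)) 0 := by
    have := hd'.comp_hasDerivAt 0 hline; exact this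
  have hslope : Tendsto (fun t : ℝ => (ψ t - ψ 0) / t) (𝓝[>] (0:ℝ)) (𝓝 (ℓ (p - x))) := by
    have h1 := hasDerivAt_iff_tendsto_slope.1 hψd
    refine (h1.mono_left (nhdsWithin_mono _ ?_)).congr ?_
    · intro t ht; exact ne_of_gt ht
    · intro t; simp [slope_def_field, div_eq_inv_mul]
  have hev : ∀ᶠ t in 𝓝[>] (0:ℝ), g p - g x ≤ (ψ t - ψ 0) / t := by
    filter_upwards [Ioo_mem_nhdsGT_of_mem (by norm_num : (0:ℝ) ∈ Ico (0:ℝ) 1)] with t ht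
    have h0 : 0 < t := ht.1
    have h1 : t < 1 := ht.2
    have hcomb := hg.2 hx hp (by linarith : (0:ℝ) ≤ 1 - t) (le_of_lt h0) (by ring)
    have hxe : (1 - t) • x + t • p = x + t • (p - x) := by
      simp [smul_sub, sub_smul]; abel
    rw [hxe] at hcomb
    have h2 : (1 - t) * g x + t * g p ≤ ψ t := by simpa [smul_eq_mul] using hcomb
    have hψ0 : ψ 0 = g x := by simp [ψ]
    rw [le_div_iff₀ h0, hψ0]
    nlinarith
  have := ge_of_tendsto hslope hev
  linarith
theorem second_deriv_nonneg_of_isLocalMin {q q1 : ℝ → ℝ} {c : ℝ}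
    (hmin : IsLocalMin q 0) (hq : ∀ᶠ t in 𝓝 (0:ℝ), HasDerivAt q (q1 t) t)
    (hq1 : HasDerivAt q1 c 0) : 0 ≤ c := by
  by_contra hc
  push_neg at hc
  have hq10 : q1 0 = 0 := hmin.hasDerivAt_eq_zero hq.self_of_nhds
  have hslope : Tendsto (fun t : ℝ => q1 t / t) (𝓝[>] (0:ℝ)) (𝓝 c) := by
    have h1 := hasDerivAt_iff_tendsto_slope.1 hq1
    refine (h1.mono_left (nhdsWithin_mono _ fun t ht => ne_of_gt ht)).congr ?_
    intro t; simp [slope_def_field, hq10, div_eq_inv_mul]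
  have hneg : ∀ᶠ t in 𝓝[>] (0:ℝ), q1 t < 0 := by
    filter_upwards [hslope.eventually_lt_const hc, self_mem_nhdsWithin] with t h1 h2
    have ht : (0:ℝ) < t := h2
    rcases div_neg_iff.1 h1 with ⟨ha, hb⟩ | ⟨ha, hb⟩
    · linarith
    · exact ha
  obtain ⟨u, hu, hIoo⟩ := mem_nhdsGT_iff_exists_Ioo_subset.1 hneg
  have hall : ∀ᶠ t in 𝓝 (0:ℝ), HasDerivAt q (q1 t) t ∧ q 0 ≤ q t := hq.and hmin
  obtain ⟨ε, hε, hB⟩ := Metric.eventually_nhds_iff.1 hall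
  set t0 : ℝ := min (ε / 2) ((u - 0) / 2) with ht0
  have hu' : (0:ℝ) < u := hu
  have ht0pos : 0 < t0 := by
    apply lt_min <;> linarith
  have ht0ε : t0 < ε := by
    have : t0 ≤ ε / 2 := min_le_left _ _
    linarith
  have ht0u : t0 < u := by
    have : t0 ≤ (u - 0) / 2 := min_le_right _ _
    linarith
  have hmem : ∀ s ∈ Icc (0:ℝ) t0, HasDerivAt q (q1 s) s ∧ q 0 ≤ q s := by
    intro s hs
    apply hB
    simp only [dist_zero_right, Real.norm_eq_abs, abs_of_nonneg hs.1]
    linarith [hs.2]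
  obtain ⟨ξ, hξ, hξeq⟩ := exists_hasDerivAt_eq_slope q q1 ht0pos
    (fun s hs => ((hmem s hs).1.continuousAt).continuousWithinAt)
    (fun s hs => (hmem s (Ioo_subset_Icc_self hs)).1)
  have hξneg : q1 ξ < 0 := hIoo ⟨hξ.1, lt_trans hξ.2 ht0u⟩
  have hle : q 0 ≤ q t0 := (hmem t0 ⟨le_of_lt ht0pos, le_refl _⟩).2
  rw [hξeq] at hξneg
  have := div_neg_iff.1 hξneg
  rcases this with ⟨h1, h2⟩ | ⟨h1, h2⟩ <;> linarith
theorem psd_det_amgm {n : ℕ} {M : Matrix (Fin n) (Fin n) ℝ} (hM : M.PosSemidef)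
    {r α : ℝ} (hr : 0 ≤ r) (hα : 0 < α) :
    M.det * r ^ α ≤ ((M.trace + α * r) / ((n:ℝ) + α)) ^ ((n:ℝ) + α) := by
  set D : ℝ := (n : ℝ) + α with hD
  have hDpos : 0 < D := by positivity
  have hH : M.IsHermitian := hM.1
  set μ : Fin n → ℝ := hH.eigenvalues with hμ
  have hnn : ∀ i, 0 ≤ μ i := hM.eigenvalues_nonneg
  have hdet : M.det = ∏ i, μ i := by
    simpa using hH.det_eq_prod_eigenvalues
  have htr : M.trace = ∑ i, μ i := by
    rw [hμ]; simpa using hH.trace_eq_sum_eigenvalues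
  -- weighted AM-GM over Option (Fin n)
  set wt : Option (Fin n) → ℝ := fun o => o.elim (α / D) (fun _ => 1 / D) with hwt
  set z : Option (Fin n) → ℝ := fun o => o.elim r μ with hz
  have hwnn : ∀ o ∈ (Finset.univ : Finset (Option (Fin n))), 0 ≤ wt o := by
    rintro (_ | i) _
    · exact div_nonneg hα.le hDpos.le
    · exact div_nonneg zero_le_one hDpos.le
  have hwsum : ∑ o : Option (Fin n), wt o = 1 := by
    rw [Fintype.sum_option]
    simp only [hwt, Option.elim_none, Option.elim_some]
    rw [Finset.sum_const, Finset.card_univ, Fintype.card_fin]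
    rw [nsmul_eq_mul, mul_one_div, ← add_div, div_eq_one_iff_eq hDpos.ne', hD]; ring
  have hznn : ∀ o ∈ (Finset.univ : Finset (Option (Fin n))), 0 ≤ z o := by
    rintro (_ | i) _
    · exact hr
    · exact hnn i
  have key := Real.geom_mean_le_arith_mean_weighted Finset.univ wt z hwnn hwsum hznn
  rw [Fintype.prod_option, Fintype.sum_option] at key
  simp only [hwt, hz, Option.elim_none, Option.elim_some] at key
  -- key : r ^ (α/D) * ∏ i, μ i ^ (1/D) ≤ α/D * r + ∑ i, 1/D * μ i
  have hRHS : α / D * r + ∑ i, 1 / D * μ i = (M.trace + α * r) / D := by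
    rw [htr, ← Finset.mul_sum]
    field_simp
    ring
  rw [hRHS] at key
  have hLnn : 0 ≤ r ^ (α / D) * ∏ i, μ i ^ (1 / D) := by
    apply mul_nonneg (Real.rpow_nonneg hr _)
    exact Finset.prod_nonneg fun i _ => Real.rpow_nonneg (hnn i) _
  have key2 := Real.rpow_le_rpow hLnn key (le_of_lt hDpos)
  have hexp : (r ^ (α / D) * ∏ i, μ i ^ (1 / D)) ^ D = r ^ α * ∏ i, μ i := by
    rw [Real.mul_rpow (Real.rpow_nonneg hr _)
      (Finset.prod_nonneg fun i _ => Real.rpow_nonneg (hnn i) _)]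
    congr 1
    · rw [← Real.rpow_mul hr]
      congr 1
      field_simp
    · rw [← Real.finset_prod_rpow _ _ (fun i _ => Real.rpow_nonneg (hnn i) _)]
      apply Finset.prod_congr rfl
      intro i _
      rw [← Real.rpow_mul (hnn i)]
      rw [one_div_mul_cancel (ne_of_gt hDpos), Real.rpow_one]
  rw [hexp] at key2
  rw [hdet]
  linarith [key2]
noncomputable section


variable {n : ℕ}

/-- The canonical continuous linear map sending a functional on `EuclideanSpace` to its
Riesz representative. -/
def rieszE (n : ℕ) : (EuclideanSpace ℝ (Fin n) →L[ℝ] ℝ) →L[ℝ] EuclideanSpace ℝ (Fin n) :=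
  ∑ i : Fin n, (ContinuousLinearMap.apply ℝ ℝ (EuclideanSpace.single i 1)).smulRight
    (EuclideanSpace.single i (1:ℝ))

theorem eucl_sum_single (v : EuclideanSpace ℝ (Fin n)) :
    ∑ i : Fin n, v i • EuclideanSpace.single i (1:ℝ) = v := by
  have := (EuclideanSpace.basisFun (Fin n) ℝ).sum_repr v
  simpa [EuclideanSpace.basisFun_repr, EuclideanSpace.basisFun_apply] using this

theorem inner_rieszE (ℓ : EuclideanSpace ℝ (Fin n) →L[ℝ] ℝ) (v : EuclideanSpace ℝ (Fin n)) :
    ⟪rieszE n ℓ, v⟫ = ℓ v := by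
  have hv : ℓ v = ∑ i : Fin n, v i * ℓ (EuclideanSpace.single i 1) := by
    conv_lhs => rw [← eucl_sum_single v]
    rw [map_sum]
    simp [smul_eq_mul]
  rw [hv, rieszE]
  simp only [ContinuousLinearMap.sum_apply, ContinuousLinearMap.smulRight_apply,
    ContinuousLinearMap.apply_apply, sum_inner, real_inner_smul_left,
    EuclideanSpace.inner_single_left]
  simp [mul_comm]

theorem rieszE_toDual_symm (ℓ : EuclideanSpace ℝ (Fin n) →L[ℝ] ℝ) :
    (InnerProductSpace.toDual ℝ (EuclideanSpace ℝ (Fin n))).symm ℓ = rieszE n ℓ := by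
  apply ext_inner_right ℝ
  intro v
  rw [InnerProductSpace.toDual_symm_apply, inner_rieszE]

theorem gradient_eq_comp (u : EuclideanSpace ℝ (Fin n) → ℝ) :
    gradient u = fun y => rieszE n (fderiv ℝ u y) := by
  funext y
  rw [gradient, rieszE_toDual_symm]

theorem gradient_contDiffOn {u : EuclideanSpace ℝ (Fin n) → ℝ} {U : Set (EuclideanSpace ℝ (Fin n))}
    (hUopen : IsOpen U) (hu : ContDiffOn ℝ 2 u U) :
    ContDiffOn ℝ 1 (gradient u) U := by
  have hu1 : ContDiffOn ℝ 1 (fderiv ℝ u) U := hu.fderiv_of_isOpen hUopen (by norm_num)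
  rw [gradient_eq_comp u]
  exact (rieszE n).contDiff.comp_contDiffOn hu1

theorem gradient_hasFDerivAt {u : EuclideanSpace ℝ (Fin n) → ℝ} {U : Set (EuclideanSpace ℝ (Fin n))}
    (hUopen : IsOpen U) (hu : ContDiffOn ℝ 2 u U) {x : EuclideanSpace ℝ (Fin n)} (hx : x ∈ U) :
    HasFDerivAt (gradient u) (fderiv ℝ (gradient u) x) x :=
  (((gradient_contDiffOn hUopen hu).differentiableOn one_ne_zero x hx).differentiableAt
    (hUopen.mem_nhds hx)).hasFDerivAt

theorem fderiv_fderiv_hasFDerivAt {u : EuclideanSpace ℝ (Fin n) → ℝ}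
    {U : Set (EuclideanSpace ℝ (Fin n))}
    (hUopen : IsOpen U) (hu : ContDiffOn ℝ 2 u U) {x : EuclideanSpace ℝ (Fin n)} (hx : x ∈ U) :
    HasFDerivAt (fderiv ℝ u) (fderiv ℝ (fderiv ℝ u) x) x := by
  have hu1 : ContDiffOn ℝ 1 (fderiv ℝ u) U := hu.fderiv_of_isOpen hUopen (by norm_num)
  exact (((hu1.differentiableOn one_ne_zero) x hx).differentiableAt (hUopen.mem_nhds hx)).hasFDerivAt

theorem fderiv_gradient_inner {u : EuclideanSpace ℝ (Fin n) → ℝ}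
    {U : Set (EuclideanSpace ℝ (Fin n))}
    (hUopen : IsOpen U) (hu : ContDiffOn ℝ 2 u U) {x : EuclideanSpace ℝ (Fin n)} (hx : x ∈ U)
    (h v : EuclideanSpace ℝ (Fin n)) :
    ⟪fderiv ℝ (gradient u) x h, v⟫ = fderiv ℝ (fderiv ℝ u) x h v := by
  have hB := fderiv_fderiv_hasFDerivAt hUopen hu hx
  have hcomp : HasFDerivAt (gradient u) ((rieszE n).comp (fderiv ℝ (fderiv ℝ u) x)) x := by
    rw [gradient_eq_comp u]
    exact (rieszE n).hasFDerivAt.comp x hB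
  rw [hcomp.fderiv]
  exact inner_rieszE _ _

theorem inner_gradient_eq (u : EuclideanSpace ℝ (Fin n) → ℝ) (x v : EuclideanSpace ℝ (Fin n)) :
    ⟪gradient u x, v⟫ = fderiv ℝ u x v := by
  rw [gradient_eq_comp u]
  exact inner_rieszE _ _

theorem contact_hessian {u : EuclideanSpace ℝ (Fin n) → ℝ}
    {U Ω : Set (EuclideanSpace ℝ (Fin n))}
    (hUopen : IsOpen U) (hΩopen : IsOpen Ω) (hΩU : Ω ⊆ U) (hu : ContDiffOn ℝ 2 u U)
    {x : EuclideanSpace ℝ (Fin n)} (hx : x ∈ Ω)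
    (hcont : ∀ y ∈ Ω, u x + ⟪gradient u x, y - x⟫ ≤ u y) :
    ∃ M : Matrix (Fin n) (Fin n) ℝ, M.PosSemidef ∧ M.trace = lapl u x ∧
      M.det = (fderiv ℝ (gradient u) x).det := by
  classical
  have hxU : x ∈ U := hΩU hx
  set B : EuclideanSpace ℝ (Fin n) →L[ℝ] EuclideanSpace ℝ (Fin n) →L[ℝ] ℝ :=
    fderiv ℝ (fderiv ℝ u) x with hBdef
  set e : Fin n → EuclideanSpace ℝ (Fin n) := fun i => EuclideanSpace.single i 1 with he
  have hB : HasFDerivAt (fderiv ℝ u) B x := fderiv_fderiv_hasFDerivAt hUopen hu hxU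
  have hsymm : ∀ v w, B v w = B w v := by
    intro v w
    exact ((hu x hxU).contDiffAt (hUopen.mem_nhds hxU)).isSymmSndFDerivAt (by simp) v w
  have hudiff : ∀ y ∈ U, HasFDerivAt u (fderiv ℝ u y) y := fun y hy =>
    (((hu.differentiableOn (by norm_num)) y hy).differentiableAt (hUopen.mem_nhds hy)).hasFDerivAt
  -- positivity of the second derivative in every direction
  have hBvv : ∀ v : EuclideanSpace ℝ (Fin n), 0 ≤ B v v := by
    intro v
    set c : ℝ := fderiv ℝ u x v with hcdef
    set q : ℝ → ℝ := fun t => u (x + t • v) - t * c with hqdef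
    set q1 : ℝ → ℝ := fun t => fderiv ℝ u (x + t • v) v - c with hq1def
    have hline : ∀ t : ℝ, HasDerivAt (fun s : ℝ => x + s • v) v t := fun t => by
      simpa using ((hasDerivAt_id t).smul_const v).const_add x
    have htend : Tendsto (fun t : ℝ => x + t • v) (𝓝 0) (𝓝 x) := by
      have : Continuous (fun t : ℝ => x + t • v) := by continuity
      simpa using this.tendsto 0
    have hmin : IsLocalMin q 0 := by
      filter_upwards [htend.eventually (hΩopen.mem_nhds hx)] with t ht
      have h1 := hcont (x + t • v) ht
      have h2 : ⟪gradient u x, (x + t • v) - x⟫ = t * c := by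
        have : (x + t • v) - x = t • v := by abel
        rw [this, real_inner_smul_right, inner_gradient_eq]
      simp only [hqdef, zero_smul, add_zero, zero_mul, sub_zero]
      simp only [h2] at h1
      linarith
    have hq : ∀ᶠ t in 𝓝 (0:ℝ), HasDerivAt q (q1 t) t := by
      filter_upwards [htend.eventually (hUopen.mem_nhds hxU)] with t ht
      have h1 : HasDerivAt (fun s : ℝ => u (x + s • v)) (fderiv ℝ u (x + t • v) v) t :=
        (hudiff _ ht).comp_hasDerivAt t (hline t)
      have h3 := h1.sub (hasDerivAt_mul_const (x := t) c); exact h3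
    have hq1 : HasDerivAt q1 (B v v) 0 := by
      have h2 : HasFDerivAt (fun y => fderiv ℝ u y v)
          ((ContinuousLinearMap.apply ℝ ℝ v).comp B) x :=
        (ContinuousLinearMap.apply ℝ ℝ v).hasFDerivAt.comp x hB
      have h2' : HasFDerivAt (fun y => fderiv ℝ u y v)
          ((ContinuousLinearMap.apply ℝ ℝ v).comp B) (x + (0:ℝ) • v) := by simpa using h2
      have h3 : HasDerivAt (fun s : ℝ => fderiv ℝ u (x + s • v) v)
          (((ContinuousLinearMap.apply ℝ ℝ v).comp B) v) 0 :=
        by have := h2'.comp_hasDerivAt 0 (hline 0); exact this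
      simpa [hq1def] using h3.sub_const c
    exact second_deriv_nonneg_of_isLocalMin hmin hq hq1
  set M : Matrix (Fin n) (Fin n) ℝ := Matrix.of (fun i j => B (e i) (e j)) with hM
  have hPSD : M.PosSemidef := by
    rw [Matrix.posSemidef_iff_dotProduct_mulVec]
    constructor
    · ext i j
      simp only [Matrix.conjTranspose_apply, hM, Matrix.of_apply, star_trivial]
      exact hsymm (e j) (e i)
    · intro xv
      have hv := hBvv (∑ i, xv i • e i)
      have heq : dotProduct (star xv) (M.mulVec xv) =
          B (∑ i, xv i • e i) (∑ j, xv j • e j) := by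
        simp only [dotProduct, Matrix.mulVec, star_trivial, map_sum, _root_.map_smul,
          ContinuousLinearMap.sum_apply, ContinuousLinearMap.smul_apply, smul_eq_mul,
          Finset.mul_sum, hM, Matrix.of_apply]
        refine Finset.sum_congr rfl fun i _ => Finset.sum_congr rfl fun j _ => ?_
        linear_combination (xv i * xv j) * hsymm (e i) (e j)
      rw [heq]
      exact hv
  refine ⟨M, hPSD, ?_, ?_⟩
  · -- trace
    rw [Matrix.trace]
    rw [lapl]
    refine Finset.sum_congr rfl fun i _ => ?_
    have h2 : HasFDerivAt (fun y => fderiv ℝ u y (e i))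
        ((ContinuousLinearMap.apply ℝ ℝ (e i)).comp B) x :=
      (ContinuousLinearMap.apply ℝ ℝ (e i)).hasFDerivAt.comp x hB
    rw [show (EuclideanSpace.single i (1:ℝ)) = e i from rfl]
    rw [h2.fderiv]
    simp [hM]
  · -- determinant
    set A := fderiv ℝ (gradient u) x with hA
    set b := (EuclideanSpace.basisFun (Fin n) ℝ).toBasis with hb
    have hAM : LinearMap.toMatrix b b (↑A : EuclideanSpace ℝ (Fin n) →ₗ[ℝ]
        EuclideanSpace ℝ (Fin n)) = M.transpose := by
      ext i j
      rw [LinearMap.toMatrix_apply]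
      have hbj : b j = e j := by
        simp [hb, he, EuclideanSpace.basisFun_apply]
      have hrepr : ∀ z : EuclideanSpace ℝ (Fin n), b.repr z i = z i := by
        intro z
        simp [hb, EuclideanSpace.basisFun_repr]
      rw [hrepr, hbj]
      have h1 : (A (e j)) i = ⟪e i, A (e j)⟫ := by
        rw [he]
        rw [EuclideanSpace.inner_single_left]
        simp
      have h2 : ⟪e i, A (e j)⟫ = ⟪A (e j), e i⟫ := real_inner_comm _ _
      have h3 : ⟪A (e j), e i⟫ = B (e j) (e i) :=
        fderiv_gradient_inner hUopen hu hxU (e j) (e i)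
      show (A (e j)) i = M.transpose i j
      rw [h1, h2, h3]
      simp [hM, Matrix.transpose_apply]
    have : M.transpose.det = A.det := by
      rw [← hAM]
      exact LinearMap.det_toMatrix b _
    rw [← Matrix.det_transpose M]
    exact this

variable {n : ℕ}

theorem inner_gradient_eq' (u : EuclideanSpace ℝ (Fin n) → ℝ) (x v : EuclideanSpace ℝ (Fin n)) :
    ⟪gradient u x, v⟫ = fderiv ℝ u x v := by
  rw [gradient, InnerProductSpace.toDual_symm_apply]

/-- Euler's identity for homogeneous functions. -/
theorem euler_identity {S : Set (EuclideanSpace ℝ (Fin n))} (hSopen : IsOpen S)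
    {w : EuclideanSpace ℝ (Fin n) → ℝ} {α : ℝ}
    (hwC1 : ContDiffOn ℝ 1 w S)
    (hhom : ∀ x ∈ S, ∀ t : ℝ, 0 < t → w (t • x) = t ^ α * w x)
    {x : EuclideanSpace ℝ (Fin n)} (hx : x ∈ S) :
    fderiv ℝ w x x = α * w x := by
  have hwd : HasFDerivAt w (fderiv ℝ w x) x :=
    ((hwC1.differentiableOn one_ne_zero x hx).differentiableAt (hSopen.mem_nhds hx)).hasFDerivAt
  have hline : HasDerivAt (fun t : ℝ => t • x) x 1 := by
    simpa using (hasDerivAt_id (1:ℝ)).smul_const x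
  have hwd' : HasFDerivAt w (fderiv ℝ w x) ((1:ℝ) • x) := by simpa using hwd
  have h1 : HasDerivAt (fun t : ℝ => w (t • x)) (fderiv ℝ w x x) 1 := by
    have := hwd'.comp_hasDerivAt 1 hline; exact this
  have h2 : (fun t : ℝ => w (t • x)) =ᶠ[𝓝 (1:ℝ)] fun t => t ^ α * w x := by
    filter_upwards [isOpen_Ioi.mem_nhds (show (1:ℝ) ∈ Set.Ioi (0:ℝ) by norm_num)] with t ht
    exact hhom x hx t ht
  have h3 : HasDerivAt (fun t : ℝ => t ^ α * w x) (α * w x) 1 := by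
    have := (Real.hasDerivAt_rpow_const (x := (1:ℝ)) (p := α) (Or.inl one_ne_zero)).mul_const (w x)
    simpa using this
  have h4 : HasDerivAt (fun t : ℝ => w (t • x)) (α * w x) 1 := h3.congr_of_eventuallyEq h2
  exact h1.unique h4

/-- First-order concavity estimate for `w^(1/α)`. -/
theorem concave_weight_bound {S : Set (EuclideanSpace ℝ (Fin n))} (hSopen : IsOpen S)
    {w : EuclideanSpace ℝ (Fin n) → ℝ} {α : ℝ} (hα : 0 < α)
    (hwpos : ∀ x ∈ S, 0 < w x)
    (hwC1 : ContDiffOn ℝ 1 w S)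
    (hhom : ∀ x ∈ S, ∀ t : ℝ, 0 < t → w (t • x) = t ^ α * w x)
    (hconc : ConcaveOn ℝ S (fun x => w x ^ (1 / α)))
    {x p : EuclideanSpace ℝ (Fin n)} (hx : x ∈ S) (hp : p ∈ S) :
    w p ^ (1 / α) ≤ 1 / α * w x ^ (1 / α - 1) * fderiv ℝ w x p := by
  have hwx : 0 < w x := hwpos x hx
  have hwd : HasFDerivAt w (fderiv ℝ w x) x :=
    ((hwC1.differentiableOn one_ne_zero x hx).differentiableAt (hSopen.mem_nhds hx)).hasFDerivAt
  have hG : HasFDerivAt (fun y => w y ^ (1 / α))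
      ((1 / α * w x ^ (1 / α - 1)) • fderiv ℝ w x) x := by
    have hr := Real.hasDerivAt_rpow_const (x := w x) (p := 1 / α) (Or.inl (ne_of_gt hwx))
    exact hr.comp_hasFDerivAt x hwd
  have h1 := concave_first_order hconc hx hp hG
  have heuler : fderiv ℝ w x x = α * w x := euler_identity hSopen hwC1 hhom hx
  have h2 : ((1 / α * w x ^ (1 / α - 1)) • fderiv ℝ w x) (p - x)
      = 1 / α * w x ^ (1 / α - 1) * (fderiv ℝ w x p - α * w x) := by
    rw [ContinuousLinearMap.smul_apply, map_sub, heuler]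
    simp [smul_eq_mul]
  have h3 : w x ^ (1 / α - 1) * (α * w x) = α * w x ^ (1 / α) := by
    have : w x ^ (1 / α - 1) * w x = w x ^ (1 / α) := by
      nth_rewrite 2 [← Real.rpow_one (w x)]
      rw [← Real.rpow_add hwx]
      ring_nf
    nlinarith [this]
  rw [h2] at h1
  have hαne : α ≠ 0 := ne_of_gt hα
  have h4 : w x ^ (1 / α - 1) * w x = w x ^ (1 / α) := by
    have hh : α * (w x ^ (1 / α - 1) * w x) = α * w x ^ (1 / α) := by nlinarith [h3]
    exact mul_left_cancel₀ hαne hh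
  have h5 : 1 / α * w x ^ (1 / α - 1) * (α * w x) = w x ^ (1 / α) := by
    rw [show 1 / α * w x ^ (1 / α - 1) * (α * w x)
        = (α * (1 / α)) * (w x ^ (1 / α - 1) * w x) by ring]
    rw [mul_one_div_cancel hαne, one_mul, h4]
  have key : w x ^ (1 / α) + 1 / α * w x ^ (1 / α - 1) * (fderiv ℝ w x p - α * w x)
      = 1 / α * w x ^ (1 / α - 1) * fderiv ℝ w x p := by
    have expand : w x ^ (1 / α) + 1 / α * w x ^ (1 / α - 1) * (fderiv ℝ w x p - α * w x)
        = w x ^ (1 / α) + 1 / α * w x ^ (1 / α - 1) * fderiv ℝ w x p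
          - 1 / α * w x ^ (1 / α - 1) * (α * w x) := by ring
    rw [expand, h5]; ring
  linarith [h1, key.le, key.ge]

theorem exists_interior_contact
    {u : EuclideanSpace ℝ (Fin n) → ℝ} {U Ω : Set (EuclideanSpace ℝ (Fin n))}
    (hUopen : IsOpen U) (hu : ContDiffOn ℝ 2 u U)
    (hΩopen : IsOpen Ω) (hΩbd : Bornology.IsBounded Ω) (hΩne : Ω.Nonempty)
    (hclU : closure Ω ⊆ U)
    {ν : EuclideanSpace ℝ (Fin n) → EuclideanSpace ℝ (Fin n)}
    (hν : IsOutwardUnitNormal Ω ν)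
    (hNeumann : ∀ x ∈ frontier Ω, ⟪gradient u x, ν x⟫ = 1)
    {p : EuclideanSpace ℝ (Fin n)} (hp : ‖p‖ < 1) :
    ∃ x ∈ Ω, gradient u x = p ∧ ∀ y ∈ Ω, u x + ⟪gradient u x, y - x⟫ ≤ u y := by
  set φ : EuclideanSpace ℝ (Fin n) → ℝ := fun y => u y - (innerSL ℝ p) y with hφdef
  have hucont : ContinuousOn u (closure Ω) := (hu.continuousOn).mono hclU
  have hφcont : ContinuousOn φ (closure Ω) :=
    hucont.sub ((innerSL ℝ p).continuous.continuousOn)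
  have hK : IsCompact (closure Ω) := hΩbd.isCompact_closure
  obtain ⟨x, hxcl, hmin⟩ := hK.exists_isMinOn hΩne.closure hφcont
  have hudiff : ∀ y ∈ U, HasFDerivAt u (fderiv ℝ u y) y := fun y hy =>
    (((hu.differentiableOn (by norm_num)) y hy).differentiableAt (hUopen.mem_nhds hy)).hasFDerivAt
  have hφder : ∀ y ∈ closure Ω, HasFDerivAt φ (fderiv ℝ u y - innerSL ℝ p) y := fun y hy =>
    (hudiff y (hclU hy)).sub (innerSL ℝ p).hasFDerivAt
  by_cases hxm : x ∈ Ω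
  · have hloc : IsLocalMin φ x :=
      hmin.isLocalMin (Filter.mem_of_superset (hΩopen.mem_nhds hxm) subset_closure)
    have h0 : fderiv ℝ φ x = 0 := hloc.fderiv_eq_zero
    have hder := hφder x (subset_closure hxm)
    have hfd : fderiv ℝ u x = innerSL ℝ p := by
      have := hder.fderiv
      rw [h0] at this
      have h2 : fderiv ℝ u x - innerSL ℝ p = 0 := this.symm
      rwa [sub_eq_zero] at h2
    have ggrad : gradient u x = p := by
      apply ext_inner_right ℝ
      intro v
      rw [inner_gradient_eq', hfd]
      simp
    refine ⟨x, hxm, ggrad, fun y hy => ?_⟩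
    have hm := hmin (subset_closure hy)
    simp only [hφdef, innerSL_apply_apply] at hm
    rw [ggrad, inner_sub_right]
    simp only [Set.mem_setOf_eq] at hm
    linarith [hm]
  · have hxf : x ∈ frontier Ω := by
      rw [hΩopen.frontier_eq]; exact ⟨hxcl, hxm⟩
    obtain ⟨hn1, -, hin⟩ := hν x hxf
    have hNe := hNeumann x hxf
    have hfd := hφder x hxcl
    have hline : HasDerivAt (fun t : ℝ => x + t • (-(ν x))) (-(ν x)) 0 := by
      simpa using ((hasDerivAt_id (0:ℝ)).smul_const (-(ν x))).const_add x
    have hfd' : HasFDerivAt φ (fderiv ℝ u x - innerSL ℝ p) (x + (0:ℝ) • (-(ν x))) := by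
      simpa using hfd
    set ψ : ℝ → ℝ := fun t => φ (x + t • (-(ν x))) with hψdef
    have hψ : HasDerivAt ψ ((fderiv ℝ u x - innerSL ℝ p) (-(ν x))) 0 :=
      by have := hfd'.comp_hasDerivAt 0 hline; exact this
    have hval : (fderiv ℝ u x - innerSL ℝ p) (-(ν x)) = ⟪p, ν x⟫ - 1 := by
      rw [ContinuousLinearMap.sub_apply]
      have h1 : fderiv ℝ u x (-(ν x)) = -1 := by
        have := inner_gradient_eq' u x (ν x)
        rw [hNe] at this
        rw [map_neg, ← this]
      rw [h1]
      simp [inner_neg_right]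
      ring
    have hc : (fderiv ℝ u x - innerSL ℝ p) (-(ν x)) < 0 := by
      rw [hval]
      have h2 : ⟪p, ν x⟫ ≤ ‖p‖ * ‖ν x‖ := real_inner_le_norm p (ν x)
      rw [hn1, mul_one] at h2
      linarith
    have hslope : Tendsto (fun t : ℝ => (ψ t - ψ 0) / t) (𝓝[>] (0:ℝ))
        (𝓝 ((fderiv ℝ u x - innerSL ℝ p) (-(ν x)))) := by
      have h1 := hasDerivAt_iff_tendsto_slope.1 hψ
      refine (h1.mono_left (nhdsWithin_mono _ fun t ht => ne_of_gt ht)).congr ?_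
      intro t; simp [slope_def_field, div_eq_inv_mul]
    have hev : ∀ᶠ t in 𝓝[>] (0:ℝ), (ψ t - ψ 0) / t < 0 := hslope.eventually_lt_const hc
    obtain ⟨t, ht1, ht2, ht3⟩ := (hev.and (hin.and self_mem_nhdsWithin)).exists
    have htpos : (0:ℝ) < t := ht3
    have hnum : ψ t - ψ 0 < 0 := by
      rcases div_neg_iff.1 ht1 with ⟨h1, h2⟩ | ⟨h1, h2⟩
      · linarith
      · exact h1
    have hpt : x + t • (-(ν x)) = x - t • ν x := by
      rw [smul_neg, ← sub_eq_add_neg]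
    have hψ0 : ψ 0 = φ x := by simp [hψdef]
    have hcontr := hmin (subset_closure ht2)
    simp only [Set.mem_setOf_eq] at hcontr
    have : φ x ≤ φ (x - t • ν x) := hcontr
    rw [← hpt] at this
    have : φ x ≤ ψ t := this
    rw [hψ0] at hnum
    linarith


theorem psd_det_nonneg {m : ℕ} {M : Matrix (Fin m) (Fin m) ℝ} (hM : M.PosSemidef) :
    0 ≤ M.det := by
  have hH := hM.1
  have : M.det = ∏ i, hH.eigenvalues i := by simpa using hH.det_eq_prod_eigenvalues
  rw [this]
  exact Finset.prod_nonneg fun i _ => hM.eigenvalues_nonneg i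

theorem psd_trace_nonneg {m : ℕ} {M : Matrix (Fin m) (Fin m) ℝ} (hM : M.PosSemidef) :
    0 ≤ M.trace := by
  have hH := hM.1
  have htr : M.trace = ∑ i, hH.eigenvalues i := by
    simpa using hH.trace_eq_sum_eigenvalues
  rw [htr]
  exact Finset.sum_nonneg fun i _ => hM.eigenvalues_nonneg i

/-- **Main ABP estimate of the proof.** With `S`, `w`, `α`, `D = n + α` as in the main
theorem and with `w ≡ 0` on `∂S`, if `Ω` is a bounded smooth domain with `closure Ω ⊆ S`
and `u ∈ C²(Ω̄)` solves `w⁻¹ div(w∇u) = b_Ω` in `Ω`, `∂u/∂ν = 1` on `∂Ω`, with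
`b_Ω = P(Ω)/m(Ω)`, then `m(S ∩ B₁) ≤ (b_Ω/D)^D m(Ω)`. -/
theorem abp_estimate_weighted_isoperimetric
    (n : ℕ) (hn : 1 ≤ n)
    (S : Set (EuclideanSpace ℝ (Fin n)))
    (hSopen : IsOpen S) (hSconv : Convex ℝ S)
    (hScone : ∀ x ∈ S, ∀ t : ℝ, 0 < t → t • x ∈ S)
    (α : ℝ) (hα : 0 < α)
    (w : EuclideanSpace ℝ (Fin n) → ℝ)
    (hwcont : ContinuousOn w (closure S))
    (hwzero : ∀ x ∈ frontier S, w x = 0)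
    (hwpos : ∀ x ∈ S, 0 < w x)
    (γ : ℝ≥0) (hγ0 : 0 < γ) (hγ1 : γ < 1)
    (hwC1 : ContDiffOn ℝ 1 w S)
    (hwHolder : ∀ x ∈ S, ∃ U ∈ nhds x, ∃ C : ℝ≥0,
      HolderOnWith C γ (fderiv ℝ w) (U ∩ S))
    (hhom : ∀ x ∈ S, ∀ t : ℝ, 0 < t → w (t • x) = t ^ α * w x)
    (hconc : ConcaveOn ℝ S (fun x => w x ^ (1 / α)))
    (Ω : Set (EuclideanSpace ℝ (Fin n))) (hΩ : IsSmoothDomain Ω) (hΩS : closure Ω ⊆ S)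
    (u : EuclideanSpace ℝ (Fin n) → ℝ)
    (U : Set (EuclideanSpace ℝ (Fin n))) (hUopen : IsOpen U) (hΩU : closure Ω ⊆ U)
    (hu : ContDiffOn ℝ 2 u U)
    (ν : EuclideanSpace ℝ (Fin n) → EuclideanSpace ℝ (Fin n))
    (hν : IsOutwardUnitNormal Ω ν)
    (bΩ : ℝ)
    (hb : bΩ = (∫ x in frontier Ω, w x ∂(μH[(n : ℝ) - 1])) / (∫ x in Ω, w x))
    (heq : ∀ x ∈ Ω, ⟪gradient w x, gradient u x⟫ + w x * lapl u x = bΩ * w x)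
    (hNeumann : ∀ x ∈ frontier Ω, ⟪gradient u x, ν x⟫ = 1) :
    (∫ x in S ∩ ball (0 : EuclideanSpace ℝ (Fin n)) 1, w x) ≤
      (bΩ / ((n : ℝ) + α)) ^ ((n : ℝ) + α) * ∫ x in Ω, w x := by
  classical
  obtain ⟨hΩopen, hΩconn, hΩbd, -⟩ := hΩ
  have hΩne : Ω.Nonempty := hΩconn.nonempty
  have hΩS' : Ω ⊆ S := subset_closure.trans hΩS
  have hΩU' : Ω ⊆ U := subset_closure.trans hΩU
  have hαne : α ≠ 0 := ne_of_gt hα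
  set D : ℝ := (n : ℝ) + α with hDdef
  have hDpos : 0 < D := by positivity
  set c : ℝ := (bΩ / D) ^ D with hcdef
  set T : Set (EuclideanSpace ℝ (Fin n)) :=
    S ∩ ball (0 : EuclideanSpace ℝ (Fin n)) 1 with hTdef
  -- nonnegativity of w on the closure
  have hwnn : ∀ x ∈ closure S, 0 ≤ w x := by
    intro x hx
    rw [closure_eq_interior_union_frontier, hSopen.interior_eq] at hx
    rcases hx with hx | hx
    · exact (hwpos x hx).le
    · rw [hwzero x hx]
  -- integrability of w
  have hclΩS : closure Ω ⊆ closure S := hΩS.trans subset_closure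
  have hintΩ : IntegrableOn w Ω := by
    have h1 : IntegrableOn w (closure Ω) :=
      (hwcont.mono hclΩS).integrableOn_compact hΩbd.isCompact_closure
    exact h1.mono_set subset_closure
  -- positivity of the weighted volume of Ω
  have hmpos : 0 < ∫ x in Ω, w x := by
    rw [setIntegral_pos_iff_support_of_nonneg_ae
      ((ae_restrict_iff' hΩopen.measurableSet).2
        (Filter.Eventually.of_forall fun x hx => (hwpos x (hΩS' hx)).le)) hintΩ]
    have hsub : Ω ⊆ Function.support w ∩ Ω :=
      fun x hx => ⟨fun h0 => (ne_of_gt (hwpos x (hΩS' hx))) h0, hx⟩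
    calc (0:ℝ≥0∞) < volume Ω := hΩopen.measure_pos volume hΩne
    _ ≤ volume (Function.support w ∩ Ω) := measure_mono hsub
  have hbnn : 0 ≤ bΩ := by
    rw [hb]
    refine div_nonneg (setIntegral_nonneg isClosed_frontier.measurableSet fun x hx => ?_) hmpos.le
    exact (hwpos x (hΩS (frontier_subset_closure hx))).le
  have hcnn : 0 ≤ c := Real.rpow_nonneg (div_nonneg hbnn hDpos.le) _
  -- measurable extension W of w
  set W : EuclideanSpace ℝ (Fin n) → ℝ := (closure S).piecewise w (fun _ => 0) with hWdef
  have hWmeas : Measurable W :=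
    ContinuousOn.measurable_piecewise hwcont continuousOn_const isClosed_closure.measurableSet
  have hWeq : ∀ x ∈ closure S, W x = w x := fun x hx => Set.piecewise_eq_of_mem _ _ _ hx
  have hWnn : ∀ x, 0 ≤ W x := by
    intro x
    rw [hWdef]
    by_cases hx : x ∈ closure S
    · rw [Set.piecewise_eq_of_mem _ _ _ hx]; exact hwnn x hx
    · rw [Set.piecewise_eq_of_notMem _ _ _ hx]
  -- gradient-related objects
  have hgC : ContinuousOn (gradient u) U := (gradient_contDiffOn hUopen hu).continuousOn
  set V : Set (EuclideanSpace ℝ (Fin n)) := Ω ∩ (gradient u) ⁻¹' S with hVdef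
  have hVU : V ⊆ U := fun x hx => hΩU' hx.1
  have hVopen : IsOpen V := (hgC.mono hΩU').isOpen_inter_preimage hΩopen hSopen
  have hVg : ∀ x ∈ V, gradient u x ∈ S := fun x hx => hx.2
  set h : EuclideanSpace ℝ (Fin n) → ℝ :=
    V.piecewise (fun x => w (gradient u x)) (fun _ => 0) with hhdef
  have hwgC : ContinuousOn (fun x => w (gradient u x)) V :=
    (hwcont.mono subset_closure).comp (hgC.mono hVU) (fun x hx => hVg x hx)
  have hhmeas : Measurable h :=
    ContinuousOn.measurable_piecewise hwgC continuousOn_const hVopen.measurableSet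
  have hheq : ∀ x ∈ V, h x = w (gradient u x) := fun x hx => Set.piecewise_eq_of_mem _ _ _ hx
  have hhnn : ∀ x, 0 ≤ h x := by
    intro x
    rw [hhdef]
    by_cases hx : x ∈ V
    · rw [Set.piecewise_eq_of_mem _ _ _ hx]; exact (hwpos _ (hVg x hx)).le
    · rw [Set.piecewise_eq_of_notMem _ _ _ hx]
  -- determinant function
  have hAcont : ContinuousOn (fun x => fderiv ℝ (gradient u) x) U :=
    (gradient_contDiffOn hUopen hu).continuousOn_fderiv_of_isOpen hUopen le_rfl
  have hdetcont : ContinuousOn (fun x => |(fderiv ℝ (gradient u) x).det|) U :=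
    (continuous_abs.comp ContinuousLinearMap.continuous_det).comp_continuousOn hAcont
  set Dd : EuclideanSpace ℝ (Fin n) → ℝ :=
    U.piecewise (fun x => |(fderiv ℝ (gradient u) x).det|) (fun _ => 0) with hDddef
  have hDdmeas : Measurable Dd :=
    ContinuousOn.measurable_piecewise hdetcont continuousOn_const hUopen.measurableSet
  have hDdeq : ∀ x ∈ U, Dd x = |(fderiv ℝ (gradient u) x).det| :=
    fun x hx => Set.piecewise_eq_of_mem _ _ _ hx
  -- countable dense subset of Ω
  obtain ⟨Y, hYΩ, hYc, hYd⟩ : ∃ Y ⊆ Ω, Y.Countable ∧ Ω ⊆ closure Y := by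
    obtain ⟨s, hsc, hsd⟩ := TopologicalSpace.exists_countable_dense (↥Ω)
    refine ⟨Subtype.val '' s, Subtype.coe_image_subset _ _, hsc.image _, ?_⟩
    intro x hx
    have h1 : (⟨x, hx⟩ : ↥Ω) ∈ closure s := hsd.closure_eq ▸ Set.mem_univ _
    exact image_closure_subset_closure_image continuous_subtype_val ⟨_, h1, rfl⟩
  -- the contact set
  set Γ : Set (EuclideanSpace ℝ (Fin n)) :=
    {x | x ∈ V ∧ gradient u x ∈ ball (0 : EuclideanSpace ℝ (Fin n)) 1 ∧
      ∀ y ∈ Y, u x + ⟪gradient u x, y - x⟫ ≤ u y} with hΓdef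
  have hΓV : Γ ⊆ V := fun x hx => hx.1
  have hΓΩ : Γ ⊆ Ω := fun x hx => hx.1.1
  have hΓU : Γ ⊆ U := fun x hx => hΩU' (hΓΩ hx)
  have hucontU : ContinuousOn u U := hu.continuousOn
  have hΓmeas : MeasurableSet Γ := by
    have h1 : MeasurableSet (V ∩ (gradient u) ⁻¹' ball (0 : EuclideanSpace ℝ (Fin n)) 1) :=
      ((hgC.mono hVU).isOpen_inter_preimage hVopen isOpen_ball).measurableSet
    have h2 : ∀ y : EuclideanSpace ℝ (Fin n),
        MeasurableSet {x | x ∈ Ω ∧ u x + ⟪gradient u x, y - x⟫ ≤ u y} := by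
      intro y
      have hcont : ContinuousOn (fun x => u x + ⟪gradient u x, y - x⟫) Ω := by
        refine ((hucontU.mono hΩU').add ?_)
        exact ContinuousOn.inner (hgC.mono hΩU') (continuousOn_const.sub continuousOn_id)
      have hopen : IsOpen (Ω ∩ (fun x => u x + ⟪gradient u x, y - x⟫) ⁻¹' Set.Ioi (u y)) :=
        hcont.isOpen_inter_preimage hΩopen isOpen_Ioi
      have heqset : {x | x ∈ Ω ∧ u x + ⟪gradient u x, y - x⟫ ≤ u y} =
          Ω \ (Ω ∩ (fun x => u x + ⟪gradient u x, y - x⟫) ⁻¹' Set.Ioi (u y)) := by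
        ext z
        simp only [Set.mem_setOf_eq, Set.mem_diff, Set.mem_inter_iff, Set.mem_preimage,
          Set.mem_Ioi, not_and, not_lt]
        constructor
        · rintro ⟨hz, hle⟩; exact ⟨hz, fun _ => hle⟩
        · rintro ⟨hz, himp⟩; exact ⟨hz, himp hz⟩
      rw [heqset]
      exact hΩopen.measurableSet.diff hopen.measurableSet
    have heqΓ : Γ = (V ∩ (gradient u) ⁻¹' ball (0 : EuclideanSpace ℝ (Fin n)) 1) ∩
        ⋂ y ∈ Y, {x | x ∈ Ω ∧ u x + ⟪gradient u x, y - x⟫ ≤ u y} := by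
      ext z
      simp only [hΓdef, Set.mem_setOf_eq, Set.mem_inter_iff, Set.mem_preimage, Set.mem_iInter]
      constructor
      · rintro ⟨h1', h2', h3'⟩
        exact ⟨⟨h1', h2'⟩, fun y hy => ⟨h1'.1, h3' y hy⟩⟩
      · rintro ⟨⟨h1', h2'⟩, h3'⟩
        exact ⟨h1', h2', fun y hy => (h3' y hy).2⟩
    rw [heqΓ]
    exact h1.inter (MeasurableSet.biInter hYc fun y _ => h2 y)
  -- full contact property
  have hcontactΓ : ∀ x ∈ Γ, ∀ y ∈ Ω, u x + ⟪gradient u x, y - x⟫ ≤ u y := by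
    intro x hx y hy
    have hinncont : Continuous fun z : EuclideanSpace ℝ (Fin n) => ⟪gradient u x, z - x⟫ :=
      Continuous.inner continuous_const (continuous_id.sub continuous_const)
    set ξ : EuclideanSpace ℝ (Fin n) → ℝ :=
      fun z => u z - u x - ⟪gradient u x, z - x⟫ with hξdef
    have hξcont : ContinuousAt ξ y := by
      have h1 : ContinuousOn ξ U :=
        (hucontU.sub continuousOn_const).sub hinncont.continuousOn
      exact h1.continuousAt (hUopen.mem_nhds (hΩU' hy))
    have hne : (𝓝[Y] y).NeBot := mem_closure_iff_nhdsWithin_neBot.1 (hYd hy)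
    have htend : Tendsto ξ (𝓝[Y] y) (𝓝 (ξ y)) := hξcont.tendsto.mono_left nhdsWithin_le_nhds
    have hev : ∀ᶠ z in 𝓝[Y] y, 0 ≤ ξ z := by
      refine eventually_nhdsWithin_of_forall fun z hz => ?_
      have := hx.2.2 z hz
      simp only [hξdef]
      linarith
    have h0 : 0 ≤ ξ y := ge_of_tendsto htend hev
    simp only [hξdef] at h0
    linarith
  -- surjectivity of the gradient map onto T
  have hsurj : ∀ p ∈ T, ∃ x ∈ Γ, gradient u x = p := by
    intro p hp
    have hpnorm : ‖p‖ < 1 := by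
      have := hp.2; rwa [mem_ball, dist_zero_right] at this
    obtain ⟨x, hxΩ, hgx, hcontact⟩ :=
      exists_interior_contact hUopen hu hΩopen hΩbd hΩne hΩU hν hNeumann hpnorm
    refine ⟨x, ⟨⟨hxΩ, ?_⟩, ?_, fun y hy => hcontact y (hYΩ hy)⟩, hgx⟩
    · rw [Set.mem_preimage, hgx]; exact hp.1
    · rw [hgx]; exact hp.2
  -- image identity for all levels t
  have himg : ∀ t : ℝ, T ∩ {p | t < W p} = gradient u '' (Γ ∩ {x | t < h x}) := by
    intro t
    ext p
    constructor
    · rintro ⟨hpT, hpt⟩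
      obtain ⟨x, hxΓ, hgx⟩ := hsurj p hpT
      refine ⟨x, ⟨hxΓ, ?_⟩, hgx⟩
      rw [Set.mem_setOf_eq, hheq x (hΓV hxΓ), hgx]
      rwa [Set.mem_setOf_eq, hWeq p (subset_closure hpT.1)] at hpt
    · rintro ⟨x, ⟨hxΓ, hxt⟩, rfl⟩
      have hgS : gradient u x ∈ S := hVg x (hΓV hxΓ)
      refine ⟨⟨hgS, hxΓ.2.1⟩, ?_⟩
      rw [Set.mem_setOf_eq, hWeq _ (subset_closure hgS)]
      rwa [Set.mem_setOf_eq, hheq x (hΓV hxΓ)] at hxt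
  -- pointwise ABP estimate on the contact set
  have hkey : ∀ x ∈ Γ, 0 ≤ (fderiv ℝ (gradient u) x).det ∧
      w (gradient u x) * (fderiv ℝ (gradient u) x).det ≤ w x * c := by
    intro x hxΓ
    have hxΩ : x ∈ Ω := hΓΩ hxΓ
    have hxS : x ∈ S := hΩS' hxΩ
    have hxU : x ∈ U := hΩU' hxΩ
    have hpS : gradient u x ∈ S := hVg x (hΓV hxΓ)
    have hwx : 0 < w x := hwpos x hxS
    have hwp : 0 < w (gradient u x) := hwpos _ hpS
    obtain ⟨M, hPSD, htrM, hdetM⟩ :=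
      contact_hessian hUopen hΩopen hΩU' hu hxΩ (hcontactΓ x hxΓ)
    have hdet0 : 0 ≤ M.det := psd_det_nonneg hPSD
    refine ⟨hdetM ▸ hdet0, ?_⟩
    set r : ℝ := (w (gradient u x) / w x) ^ (1 / α) with hrdef
    have hqnn : 0 ≤ w (gradient u x) / w x := div_nonneg hwp.le hwx.le
    have hr : 0 ≤ r := Real.rpow_nonneg hqnn _
    have hamgm := psd_det_amgm hPSD hr hα
    have hrα : r ^ α = w (gradient u x) / w x := by
      rw [hrdef, ← Real.rpow_mul hqnn, one_div_mul_cancel hαne, Real.rpow_one]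
    -- concavity bound
    have hcw := concave_weight_bound hSopen hα hwpos hwC1 hhom hconc hxS hpS
    have hrr : r = w (gradient u x) ^ (1 / α) / w x ^ (1 / α) := by
      rw [hrdef, Real.div_rpow hwp.le hwx.le]
    have h4 : w x ^ (1 / α - 1) * w x = w x ^ (1 / α) := by
      have h4' : w x ^ (1 / α - 1) * w x ^ (1:ℝ) = w x ^ ((1 / α - 1) + 1) :=
        (Real.rpow_add hwx _ _).symm
      rw [Real.rpow_one] at h4'
      rw [h4']
      norm_num
    have hwx1α : 0 < w x ^ (1 / α) := Real.rpow_pos_of_pos hwx _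
    have hαr : α * r ≤ fderiv ℝ w x (gradient u x) / w x := by
      have step : α * w (gradient u x) ^ (1 / α)
          ≤ w x ^ (1 / α - 1) * fderiv ℝ w x (gradient u x) := by
        have h1 := mul_le_mul_of_nonneg_left hcw hα.le
        calc α * w (gradient u x) ^ (1 / α)
            ≤ α * (1 / α * w x ^ (1 / α - 1) * fderiv ℝ w x (gradient u x)) := h1
          _ = w x ^ (1 / α - 1) * fderiv ℝ w x (gradient u x) := by
              field_simp
      have h2 : α * r = α * w (gradient u x) ^ (1 / α) / w x ^ (1 / α) := by
        rw [hrr]; ring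
      rw [h2, div_le_div_iff₀ hwx1α hwx]
      calc α * w (gradient u x) ^ (1 / α) * w x
          ≤ w x ^ (1 / α - 1) * fderiv ℝ w x (gradient u x) * w x :=
            mul_le_mul_of_nonneg_right step hwx.le
        _ = fderiv ℝ w x (gradient u x) * w x ^ (1 / α) := by rw [← h4]; ring
    -- PDE gives the trace bound
    have hlap : lapl u x = bΩ - fderiv ℝ w x (gradient u x) / w x := by
      have he := heq x hxΩ
      have hgw : ⟪gradient w x, gradient u x⟫ = fderiv ℝ w x (gradient u x) :=
        inner_gradient_eq' w x _
      rw [hgw] at he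
      field_simp
      linarith
    have htrb : M.trace + α * r ≤ bΩ := by
      rw [htrM, hlap]; linarith
    have htrnn : 0 ≤ M.trace := psd_trace_nonneg hPSD
    have hbase : 0 ≤ (M.trace + α * r) / D :=
      div_nonneg (by nlinarith) hDpos.le
    have hmono2 : ((M.trace + α * r) / D) ^ D ≤ (bΩ / D) ^ D :=
      Real.rpow_le_rpow hbase ((div_le_div_iff_of_pos_right hDpos).2 htrb) hDpos.le
    have h6 : M.det * (w (gradient u x) / w x) ≤ c := by
      rw [← hrα]
      exact hamgm.trans hmono2
    rw [div_eq_mul_inv] at h6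
    have h7 := mul_le_mul_of_nonneg_right h6 hwx.le
    have h8 : M.det * (w (gradient u x) * (w x)⁻¹) * w x = w (gradient u x) * M.det := by
      rw [mul_assoc, mul_assoc, inv_mul_cancel₀ (ne_of_gt hwx), mul_one]; ring
    rw [h8] at h7
    rw [← hdetM]
    linarith
  -- ======= measure-theoretic chain =======
  have hTmeas : MeasurableSet T := (hSopen.inter isOpen_ball).measurableSet
  have hlayer : ∫⁻ p in T, ENNReal.ofReal (W p)
      = ∫⁻ t in Set.Ioi (0:ℝ), volume (T ∩ {p | t < W p}) := by
    rw [lintegral_eq_lintegral_meas_lt (volume.restrict T)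
      (Filter.Eventually.of_forall fun p => hWnn p) hWmeas.aemeasurable]
    refine lintegral_congr fun t => ?_
    rw [Measure.restrict_apply (measurableSet_lt measurable_const hWmeas), Set.inter_comm]
  have hstep : ∀ t : ℝ, volume (T ∩ {p | t < W p})
      ≤ ∫⁻ x in Γ ∩ {x | t < h x}, ENNReal.ofReal (Dd x) := by
    intro t
    rw [himg t]
    have hst : MeasurableSet (Γ ∩ {x | t < h x}) :=
      hΓmeas.inter (measurableSet_lt measurable_const hhmeas)
    have hder : ∀ x ∈ Γ ∩ {x | t < h x}, HasFDerivWithinAt (gradient u)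
        (fderiv ℝ (gradient u) x) (Γ ∩ {x | t < h x}) x := fun x hx =>
      (gradient_hasFDerivAt hUopen hu (hΓU hx.1)).hasFDerivWithinAt
    refine (addHaar_image_le_lintegral_abs_det_fderiv volume hst hder).trans (le_of_eq ?_)
    refine setLIntegral_congr_fun hst (fun x hx => ?_)
    rw [hDdeq x (hΓU hx.1)]
  have hindic : ∀ t : ℝ, ∫⁻ x in Γ ∩ {x | t < h x}, ENNReal.ofReal (Dd x)
      = ∫⁻ x in Γ, ({x | t < h x}).indicator (fun x => ENNReal.ofReal (Dd x)) x := by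
    intro t
    rw [lintegral_indicator (measurableSet_lt measurable_const hhmeas),
      Measure.restrict_restrict (measurableSet_lt measurable_const hhmeas), Set.inter_comm]
  have hFmeas : Measurable (Function.uncurry fun (t : ℝ) (x : EuclideanSpace ℝ (Fin n)) =>
      ({x | t < h x}).indicator (fun x => ENNReal.ofReal (Dd x)) x) := by
    have h2 : MeasurableSet {q : ℝ × EuclideanSpace ℝ (Fin n) | q.1 < h q.2} :=
      measurableSet_lt measurable_fst (hhmeas.comp measurable_snd)
    have heqF : (Function.uncurry fun (t : ℝ) (x : EuclideanSpace ℝ (Fin n)) =>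
        ({x | t < h x}).indicator (fun x => ENNReal.ofReal (Dd x)) x)
        = {q : ℝ × EuclideanSpace ℝ (Fin n) | q.1 < h q.2}.indicator
            (fun q => ENNReal.ofReal (Dd q.2)) := by
      funext q
      rcases q with ⟨t, x⟩
      simp only [Function.uncurry, Set.indicator_apply, Set.mem_setOf_eq]
    rw [heqF]
    exact ((hDdmeas.comp measurable_snd).ennreal_ofReal).indicator h2
  have hswap : ∫⁻ t in Set.Ioi (0:ℝ), ∫⁻ x in Γ,
        ({x | t < h x}).indicator (fun x => ENNReal.ofReal (Dd x)) x
      = ∫⁻ x in Γ, ∫⁻ t in Set.Ioi (0:ℝ),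
        ({x | t < h x}).indicator (fun x => ENNReal.ofReal (Dd x)) x :=
    lintegral_lintegral_swap hFmeas.aemeasurable
  have hinner : ∀ x : EuclideanSpace ℝ (Fin n),
      (∫⁻ t in Set.Ioi (0:ℝ), ({x' | t < h x'}).indicator
        (fun x' => ENNReal.ofReal (Dd x')) x)
      = ENNReal.ofReal (Dd x) * ENNReal.ofReal (h x) := by
    intro x
    have h1 : ∀ t : ℝ, ({x' | t < h x'}).indicator (fun x' => ENNReal.ofReal (Dd x')) x
        = (Set.Iio (h x)).indicator (fun _ => ENNReal.ofReal (Dd x)) t := by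
      intro t
      simp only [Set.indicator_apply, Set.mem_setOf_eq, Set.mem_Iio]
    rw [lintegral_congr h1, lintegral_indicator measurableSet_Iio,
      Measure.restrict_restrict measurableSet_Iio, setLIntegral_const]
    have h3 : (Set.Iio (h x) ∩ Set.Ioi (0:ℝ)) = Set.Ioo 0 (h x) := by
      ext t
      simp only [Set.mem_inter_iff, Set.mem_Iio, Set.mem_Ioi, Set.mem_Ioo]
      tauto
    rw [h3, Real.volume_Ioo, show h x - 0 = h x by ring]
  have hpt : ∀ x ∈ Γ, ENNReal.ofReal (Dd x) * ENNReal.ofReal (h x)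
      ≤ ENNReal.ofReal (W x * c) := by
    intro x hx
    obtain ⟨hd0, hkey2⟩ := hkey x hx
    rw [hDdeq x (hΓU hx), hheq x (hΓV hx), abs_of_nonneg hd0,
      ← ENNReal.ofReal_mul hd0]
    apply ENNReal.ofReal_le_ofReal
    rw [hWeq x (subset_closure (hΩS' (hΓΩ hx))), mul_comm]
    exact hkey2
  have hΓbound : ∫⁻ x in Γ, ENNReal.ofReal (Dd x) * ENNReal.ofReal (h x)
      ≤ ∫⁻ x in Ω, ENNReal.ofReal (W x * c) := by
    refine le_trans (setLIntegral_mono ((hWmeas.mul measurable_const).ennreal_ofReal)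
      fun x hx => hpt x hx) ?_
    exact lintegral_mono_set hΓΩ
  have hconstmul : ∫⁻ x in Ω, ENNReal.ofReal (W x * c)
      = ENNReal.ofReal c * ∫⁻ x in Ω, ENNReal.ofReal (W x) := by
    rw [← lintegral_const_mul _ hWmeas.ennreal_ofReal]
    refine lintegral_congr fun x => ?_
    rw [mul_comm (W x) c, ENNReal.ofReal_mul hcnn]
  have hchain : ∫⁻ p in T, ENNReal.ofReal (W p)
      ≤ ENNReal.ofReal c * ∫⁻ x in Ω, ENNReal.ofReal (W x) := by
    rw [hlayer]
    refine (lintegral_mono fun t => hstep t).trans ?_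
    rw [lintegral_congr fun t => hindic t, hswap, lintegral_congr fun x => hinner x]
    rw [← hconstmul]
    exact hΓbound
  -- ======= conversion back to Bochner integrals =======
  have hTS : T ⊆ closure S := fun x hx => subset_closure hx.1
  have hwT_eq : ∫ x in T, w x = (∫⁻ p in T, ENNReal.ofReal (W p)).toReal := by
    rw [integral_eq_lintegral_of_nonneg_ae
      ((ae_restrict_iff' hTmeas).2 (Filter.Eventually.of_forall fun x hx => hwnn x (hTS hx)))
      ((hwcont.mono hTS).aestronglyMeasurable hTmeas)]
    congr 1
    refine setLIntegral_congr_fun hTmeas (fun x hx => ?_)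
    rw [hWeq x (hTS hx)]
  have hwΩ_eq : ∫⁻ x in Ω, ENNReal.ofReal (W x) = ENNReal.ofReal (∫ x in Ω, w x) := by
    have e1 : ∫⁻ x in Ω, ENNReal.ofReal (W x) = ∫⁻ x in Ω, ENNReal.ofReal (w x) := by
      refine setLIntegral_congr_fun hΩopen.measurableSet
        (fun x hx => ?_)
      rw [hWeq x (subset_closure (hΩS' hx))]
    rw [e1, ← ofReal_integral_eq_lintegral_ofReal hintΩ
      ((ae_restrict_iff' hΩopen.measurableSet).2
        (Filter.Eventually.of_forall fun x hx => (hwpos x (hΩS' hx)).le))]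
  rw [hwT_eq]
  have hrhs : ENNReal.ofReal c * ∫⁻ x in Ω, ENNReal.ofReal (W x)
      = ENNReal.ofReal (c * ∫ x in Ω, w x) := by
    rw [hwΩ_eq, ← ENNReal.ofReal_mul hcnn]
  have h9 : (∫⁻ p in T, ENNReal.ofReal (W p)).toReal
      ≤ (ENNReal.ofReal (c * ∫ x in Ω, w x)).toReal := by
    refine ENNReal.toReal_mono ENNReal.ofReal_ne_top ?_
    rw [← hrhs]
    exact hchain
  refine h9.trans ?_
  rw [ENNReal.toReal_ofReal (mul_nonneg hcnn hmpos.le)]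


end
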